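/- Let S be a pseudo-nilpotent finite semigroup and I an ideal of S whose upper non-nilpotent graph N_I is empty. Then every element of I is an isolated vertex in the upper non-nilpotent graph N_S, i.e., for every b ∈ I and every a ∈ S with a ≠ b, the subsemigroup ⟨a, b⟩ is Mal'cev nilpotent. -/

import Mathlib

/-!
Suppose `⟨a, b⟩` is not nilpotent, with `b ∈ I`. Then some Mal'cev sequence with data in
`⟨a, b⟩` has `λ_k ≠ ρ_k` for all `k ≤ |S × S| + 1`, so by pigeonhole it runs into a cycle
`(λ_t, ρ_t) = (λ_m, ρ_m)` with `t < m`; pseudo-nilpotency (for the empty ideal) says that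
`⟨λ_m, ρ_m⟩` is not nilpotent. Every element of `⟨a, b⟩` lies in the commutative semigroup
`⟨a⟩` or in `I`, so either `λ_1 = ρ_1`, which is excluded, or `λ_1, ρ_1 ∈ I`, and then
`λ_m, ρ_m ∈ I`. As `N_I` has no edges, `⟨λ_m, ρ_m⟩` is nilpotent after all.
-/

/-- One multiplication step `a · w · b` where `w` ranges over `S¹`
(`none` playing the role of the adjoined identity). -/
def mulW {S : Type*} [Semigroup S] (a : S) (w : Option S) (b : S) : S :=
  match w with
  | none => a * b
  | some c => a * c * b

/-- The Mal'cev sequences: `(malcev x y w n).1 = λ_n` and `(malcev x y w n).2 = ρ_n`,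
with `λ_0 = x`, `ρ_0 = y`, `λ_{n+1} = λ_n w_{n+1} ρ_n`, `ρ_{n+1} = ρ_n w_{n+1} λ_n`. -/
def malcev {S : Type*} [Semigroup S] (x y : S) (w : ℕ → Option S) : ℕ → S × S
  | 0 => (x, y)
  | n + 1 =>
      let p := malcev x y w n
      (mulW p.1 (w n) p.2, mulW p.2 (w n) p.1)

/-- Mal'cev nilpotency of a (multiplicatively closed) subset `A` of `S`,
computed with parameters from `A¹`. -/
def SetMN {S : Type*} [Semigroup S] (A : Set S) : Prop :=
  ∃ n : ℕ, 0 < n ∧ ∀ x ∈ A, ∀ y ∈ A, ∀ w : ℕ → Option S,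
    (∀ k c, w k = some c → c ∈ A) →
    (malcev x y w n).1 = (malcev x y w n).2

/-- A semigroup is Mal'cev nilpotent. -/
def IsMN (S : Type*) [Semigroup S] : Prop := SetMN (Set.univ : Set S)

/-- Equality in the Rees quotient by (the possibly empty ideal) `I`. -/
def ReesEq {S : Type*} [Semigroup S] (I : Set S) (a b : S) : Prop :=
  a = b ∨ (a ∈ I ∧ b ∈ I)

/-- Mal'cev nilpotency of the Rees quotient `A / I` (computed by lifting to `A`). -/
def SetMNMod {S : Type*} [Semigroup S] (I A : Set S) : Prop :=
  ∃ n : ℕ, 0 < n ∧ ∀ x ∈ A, ∀ y ∈ A, ∀ w : ℕ → Option S,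
    (∀ k c, w k = some c → c ∈ A) →
    ReesEq I (malcev x y w n).1 (malcev x y w n).2

/-- `I` is an ideal of (the mul-closed subset) `T`; the empty set counts as an ideal. -/
def IsIdealIn {S : Type*} [Semigroup S] (T I : Set S) : Prop :=
  I ⊆ T ∧ ∀ a ∈ I, ∀ t ∈ T, t * a ∈ I ∧ a * t ∈ I

/-- Edge of the upper non-nilpotent graph `N_S`: `⟨a,b⟩` is not Mal'cev nilpotent. -/
def NEdge {S : Type*} [Semigroup S] (a b : S) : Prop :=
  a ≠ b ∧ ¬ SetMN (Subsemigroup.closure ({a, b} : Set S) : Set S)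

/-- The generating set of the subsemigroup `⟨x, y, w_1, …, w_m⟩`. -/
def genSet {S : Type*} [Semigroup S] (x y : S) (w : ℕ → Option S) (m : ℕ) : Set S :=
  {x, y} ∪ {c | ∃ k, k < m ∧ w k = some c}

/-- A pseudo-nilpotent semigroup. -/
def IsPN (S : Type*) [Semigroup S] : Prop :=
  ∀ (x y : S) (w : ℕ → Option S) (m : ℕ) (I : Set S),
    IsIdealIn (Subsemigroup.closure (genSet x y w m) : Set S) I →
    (malcev x y w m).1 ∉ I → (malcev x y w m).2 ∉ I →
    (∃ t, t < m ∧ (malcev x y w t).1 ≠ (malcev x y w t).2 ∧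
      malcev x y w t = malcev x y w m) →
    ∀ i ≤ m, ¬ SetMNMod I
      (Subsemigroup.closure ({(malcev x y w i).1, (malcev x y w i).2} : Set S) : Set S)

theorem exists_lt_le_natCard_eq {α : Type*} [Finite α] (f : ℕ → α) :
    ∃ t m, t < m ∧ m ≤ Nat.card α ∧ f t = f m := by
  have hf : ¬ Function.Injective (fun i : Fin (Nat.card α + 1) => f i) := fun h => by
    simpa using Nat.card_le_card_of_injective _ h
  simp only [Function.Injective, not_forall] at hf
  obtain ⟨i, j, hij, hne⟩ := hf
  rcases lt_or_gt_of_ne (Fin.val_ne_of_ne hne) with h | h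
  · exact ⟨i, j, h, Nat.lt_succ_iff.mp j.isLt, hij⟩
  · exact ⟨j, i, h, Nat.lt_succ_iff.mp i.isLt, hij.symm⟩

section

variable {S : Type*} [Semigroup S]

theorem malcev_succ (x y : S) (w : ℕ → Option S) (n : ℕ) :
    malcev x y w (n + 1) =
      (mulW (malcev x y w n).1 (w n) (malcev x y w n).2,
       mulW (malcev x y w n).2 (w n) (malcev x y w n).1) := rfl

theorem malcev_fst_eq_snd_of_le {x y : S} {w : ℕ → Option S} {k j : ℕ}
    (h : (malcev x y w k).1 = (malcev x y w k).2) (hkj : k ≤ j) :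
    (malcev x y w j).1 = (malcev x y w j).2 := by
  induction j, hkj using Nat.le_induction with
  | base => exact h
  | succ n _ ih => rw [malcev_succ, ih]

theorem mulW_comm_of_mem {T : Subsemigroup S} [IsMulCommutative T] {u v : S} {w : Option S}
    (hu : u ∈ T) (hv : v ∈ T) (hw : ∀ c, w = some c → c ∈ T) : mulW u w v = mulW v w u := by
  cases w with
  | none => exact setLike_mul_comm hu hv
  | some c =>
    have hc := hw c rfl
    change u * c * v = v * c * u
    rw [setLike_mul_comm (mul_mem hu hc) hv, mul_assoc, setLike_mul_comm hu hc]

theorem SetMN.setMNMod {A : Set S} (h : SetMN A) (I : Set S) : SetMNMod I A :=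
  let ⟨n, hn, hA⟩ := h
  ⟨n, hn, fun x hx y hy w hw => Or.inl (hA x hx y hy w hw)⟩

theorem isIdealIn_empty (T : Set S) : IsIdealIn T ∅ :=
  ⟨Set.empty_subset T, fun _ h => absurd h (Set.notMem_empty _)⟩

theorem IsPN.not_setMN_of_malcev_eq (hPN : IsPN S) {x y : S} {w : ℕ → Option S} {t m : ℕ}
    (htm : t < m) (ht : (malcev x y w t).1 ≠ (malcev x y w t).2)
    (hcyc : malcev x y w t = malcev x y w m) :
    ¬ SetMN (Subsemigroup.closure ({(malcev x y w m).1, (malcev x y w m).2} : Set S) : Set S) :=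
  fun h => hPN x y w m ∅ (isIdealIn_empty _) (Set.notMem_empty _) (Set.notMem_empty _)
    ⟨t, htm, ht, hcyc⟩ m le_rfl (h.setMNMod ∅)

theorem exists_malcev_cycle_of_not_setMN [Finite S] {A : Set S} (hA : ¬ SetMN A) :
    ∃ x ∈ A, ∃ y ∈ A, ∃ w : ℕ → Option S, (∀ k c, w k = some c → c ∈ A) ∧
      ∃ t m, t < m ∧ (malcev x y w t).1 ≠ (malcev x y w t).2 ∧
        (malcev x y w m).1 ≠ (malcev x y w m).2 ∧ malcev x y w t = malcev x y w m := by
  set n := Nat.card (S × S) + 1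
  obtain ⟨x, hx, y, hy, w, hw, hn⟩ : ∃ x ∈ A, ∃ y ∈ A, ∃ w : ℕ → Option S,
      (∀ k c, w k = some c → c ∈ A) ∧ (malcev x y w n).1 ≠ (malcev x y w n).2 := by
    by_contra! h
    exact hA ⟨n, Nat.succ_pos _, h⟩
  have hne : ∀ j ≤ n, (malcev x y w j).1 ≠ (malcev x y w j).2 :=
    fun j hj h => hn (malcev_fst_eq_snd_of_le h hj)
  obtain ⟨t, m, htm, hm, hcyc⟩ := exists_lt_le_natCard_eq (malcev x y w)
  exact ⟨x, hx, y, hy, w, hw, t, m, htm, hne t (by omega), hne m (by omega), hcyc⟩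

namespace IsIdealIn

variable {I : Set S} (hI : IsIdealIn Set.univ I)
include hI

theorem mul_mem_left (t : S) {u : S} (hu : u ∈ I) : t * u ∈ I := (hI.2 u hu t trivial).1

theorem mul_mem_right {u : S} (hu : u ∈ I) (t : S) : u * t ∈ I := (hI.2 u hu t trivial).2

theorem mulW_mem {u v : S} {w : Option S} (h : u ∈ I ∨ v ∈ I ∨ ∃ c, w = some c ∧ c ∈ I) :
    mulW u w v ∈ I := by
  rcases h with hu | hv | ⟨c, rfl, hc⟩
  · cases w with
    | none => exact hI.mul_mem_right hu v
    | some c => exact hI.mul_mem_right (hI.mul_mem_right hu c) v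
  · cases w with
    | none => exact hI.mul_mem_left u hv
    | some c => exact hI.mul_mem_left (u * c) hv
  · exact hI.mul_mem_right (hI.mul_mem_left u hc) v

theorem malcev_succ_mem {x y : S} {w : ℕ → Option S} {k : ℕ}
    (h : (malcev x y w k).1 ∈ I ∨ (malcev x y w k).2 ∈ I ∨ ∃ c, w k = some c ∧ c ∈ I) :
    (malcev x y w (k + 1)).1 ∈ I ∧ (malcev x y w (k + 1)).2 ∈ I :=
  ⟨hI.mulW_mem h, hI.mulW_mem (by tauto)⟩

theorem malcev_mem_of_le {x y : S} {w : ℕ → Option S} {k j : ℕ}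
    (h : (malcev x y w k).1 ∈ I ∧ (malcev x y w k).2 ∈ I) (hkj : k ≤ j) :
    (malcev x y w j).1 ∈ I ∧ (malcev x y w j).2 ∈ I := by
  induction j, hkj using Nat.le_induction with
  | base => exact h
  | succ n _ ih => exact hI.malcev_succ_mem (Or.inl ih.1)

theorem mem_closure_singleton_or_mem {a b s : S} (hb : b ∈ I)
    (hs : s ∈ Subsemigroup.closure ({a, b} : Set S)) :
    s ∈ Subsemigroup.closure ({a} : Set S) ∨ s ∈ I := by
  induction hs using Subsemigroup.closure_induction with
  | mem z hz =>
    rcases hz with rfl | rfl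
    · exact Or.inl (Subsemigroup.subset_closure rfl)
    · exact Or.inr hb
  | mul z y _ _ hz hy =>
    rcases hz with hz | hz
    · rcases hy with hy | hy
      · exact Or.inl (mul_mem hz hy)
      · exact Or.inr (hI.mul_mem_left z hy)
    · exact Or.inr (hI.mul_mem_right hz y)

theorem malcev_mem_or_eq_of_mem_closure_pair {a b x y : S} {w : ℕ → Option S} {m : ℕ}
    (hb : b ∈ I) (hx : x ∈ Subsemigroup.closure ({a, b} : Set S))
    (hy : y ∈ Subsemigroup.closure ({a, b} : Set S))
    (hw : ∀ c, w 0 = some c → c ∈ Subsemigroup.closure ({a, b} : Set S)) (hm : 1 ≤ m) :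
    ((malcev x y w m).1 ∈ I ∧ (malcev x y w m).2 ∈ I) ∨
      (malcev x y w m).1 = (malcev x y w m).2 := by
  by_cases hxyw : x ∈ I ∨ y ∈ I ∨ ∃ c, w 0 = some c ∧ c ∈ I
  · exact Or.inl (hI.malcev_mem_of_le (hI.malcev_succ_mem (k := 0) hxyw) hm)
  · push Not at hxyw
    obtain ⟨hxI, hyI, hwI⟩ := hxyw
    have : IsMulCommutative (Subsemigroup.closure ({a} : Set S)) :=
      Subsemigroup.isMulCommutative_closure S (by simp)
    have hw' c (hc : w 0 = some c) : c ∈ Subsemigroup.closure ({a} : Set S) :=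
      (hI.mem_closure_singleton_or_mem hb (hw c hc)).resolve_right (hwI c hc)
    refine Or.inr (malcev_fst_eq_snd_of_le ?_ hm)
    exact mulW_comm_of_mem ((hI.mem_closure_singleton_or_mem hb hx).resolve_right hxI)
      ((hI.mem_closure_singleton_or_mem hb hy).resolve_right hyI) hw'

end IsIdealIn

end

/-- If `S` is pseudo-nilpotent and finite and `I` is an ideal of `S` whose upper
non-nilpotent graph is empty, then every element of `I` is an isolated vertex of
`N_S`: for every `b ∈ I` and `a ≠ b`, the subsemigroup `⟨a, b⟩` is Mal'cev nilpotent. -/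
theorem stmt5 {S : Type*} [Semigroup S] [Finite S] (hPN : IsPN S) (I : Set S)
    (hI : IsIdealIn Set.univ I) (hEmpty : ∀ a ∈ I, ∀ b ∈ I, ¬ NEdge a b) :
    ∀ b ∈ I, ∀ a : S, a ≠ b →
      SetMN (Subsemigroup.closure ({a, b} : Set S) : Set S) := by
  intro b hb a _
  by_contra hA
  obtain ⟨x, hx, y, hy, w, hw, t, m, htm, ht, hm, hcyc⟩ := exists_malcev_cycle_of_not_setMN hA
  have hmem : (malcev x y w m).1 ∈ I ∧ (malcev x y w m).2 ∈ I :=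
    (hI.malcev_mem_or_eq_of_mem_closure_pair hb hx hy (hw 0) (by omega)).resolve_right hm
  refine hPN.not_setMN_of_malcev_eq htm ht hcyc ?_
  by_contra hNotMN
  exact hEmpty _ hmem.1 _ hmem.2 ⟨hm, hNotMN⟩
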